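/- For all integers k > M ≥ 2 with M + 1 ≤ k - 2, we have Σ_{j=M+1}^{k-2} (k+M-1-j)^{-2} j^{-2} ≤ 2(k+M-1)^{-2}·(Σ_{j=M+1}^{k-2}(k+M-1-j)^{-2} + Σ_{j=M+1}^{k-2} j^{-2}) ≤ 4(k+M-1)^{-2}·M^{-1}. -/
import Mathlib

lemma sumInvSq (M : ℕ) (hM : 1 ≤ M) (N : ℕ) (hN : M ≤ N) :
    ∑ j ∈ Finset.Icc (M + 1) N, ((j : ℝ) ^ 2)⁻¹ ≤ (M : ℝ)⁻¹ - (N : ℝ)⁻¹ := by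
  induction N, hN using Nat.le_induction with
  | base =>
      simp [Finset.Icc_eq_empty_of_lt (Nat.lt_succ_self M)]
  | succ n hn ih =>
      have hmn : M ≤ n := hn
      rw [Finset.sum_Icc_succ_top (by omega : M + 1 ≤ n + 1)]
      have hpos : (0 : ℝ) < (n : ℝ) := by exact_mod_cast Nat.lt_of_lt_of_le hM hmn
      have hpos1 : (0 : ℝ) < (n : ℝ) + 1 := by linarith
      have key : (((n : ℝ) + 1) ^ 2)⁻¹ ≤ (n : ℝ)⁻¹ - ((n : ℝ) + 1)⁻¹ := by
        have h : (n : ℝ) * ((n : ℝ) + 1) ≤ ((n : ℝ) + 1) ^ 2 := by nlinarith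
        calc (((n : ℝ) + 1) ^ 2)⁻¹ ≤ ((n : ℝ) * ((n : ℝ) + 1))⁻¹ := by
              apply inv_anti₀ (by positivity) h
          _ = (n : ℝ)⁻¹ - ((n : ℝ) + 1)⁻¹ := by
              rw [inv_sub_inv (ne_of_gt hpos) (ne_of_gt hpos1),
                show ((n : ℝ) + 1 - n) = 1 by ring, one_div]
      push_cast
      linarith

lemma termIneq (a b : ℝ) (ha : 0 < a) (hb : 0 < b) :
    (a ^ 2)⁻¹ * (b ^ 2)⁻¹ ≤ 2 * (((a + b)) ^ 2)⁻¹ * ((a ^ 2)⁻¹ + (b ^ 2)⁻¹) := by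
  have hs : 0 < a + b := by linarith
  have h1 : (a ^ 2)⁻¹ * (b ^ 2)⁻¹ = (a + b) ^ 2 / ((a + b) ^ 2 * a ^ 2 * b ^ 2) := by
    field_simp
  have h2 : 2 * (((a + b)) ^ 2)⁻¹ * ((a ^ 2)⁻¹ + (b ^ 2)⁻¹)
      = (2 * (a ^ 2 + b ^ 2)) / ((a + b) ^ 2 * a ^ 2 * b ^ 2) := by
    field_simp; ring
  rw [h1, h2]
  gcongr
  nlinarith [sq_nonneg (a - b)]

/-- Discrete convolution estimate: for integers `k > M ≥ 2` with `M + 1 ≤ k - 2`,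
`Σ_{j=M+1}^{k-2} (k+M-1-j)^{-2} j^{-2}
  ≤ 2(k+M-1)^{-2} (Σ_{j=M+1}^{k-2} (k+M-1-j)^{-2} + Σ_{j=M+1}^{k-2} j^{-2})
  ≤ 4(k+M-1)^{-2} M^{-1}`. -/
theorem stmt14 (k M : ℕ) (hM : 2 ≤ M) (hk : M < k) (hk2 : M + 1 ≤ k - 2) :
    (∑ j ∈ Finset.Icc (M + 1) (k - 2),
        (((k : ℝ) + M - 1 - j) ^ 2)⁻¹ * ((j : ℝ) ^ 2)⁻¹
      ≤ 2 * (((k : ℝ) + M - 1) ^ 2)⁻¹ *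
          ((∑ j ∈ Finset.Icc (M + 1) (k - 2), (((k : ℝ) + M - 1 - j) ^ 2)⁻¹)
            + ∑ j ∈ Finset.Icc (M + 1) (k - 2), ((j : ℝ) ^ 2)⁻¹)) ∧
    2 * (((k : ℝ) + M - 1) ^ 2)⁻¹ *
        ((∑ j ∈ Finset.Icc (M + 1) (k - 2), (((k : ℝ) + M - 1 - j) ^ 2)⁻¹)
          + ∑ j ∈ Finset.Icc (M + 1) (k - 2), ((j : ℝ) ^ 2)⁻¹)
      ≤ 4 * (((k : ℝ) + M - 1) ^ 2)⁻¹ * (M : ℝ)⁻¹ := by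
  have hk5 : M + 3 ≤ k := by omega
  -- member bounds
  have hmem : ∀ j ∈ Finset.Icc (M + 1) (k - 2), M + 1 ≤ j ∧ j ≤ k - 2 := by
    intro j hj; simpa [Finset.mem_Icc] using hj
  have hposa : ∀ j ∈ Finset.Icc (M + 1) (k - 2), (0 : ℝ) < (k : ℝ) + M - 1 - j := by
    intro j hj
    obtain ⟨h1, h2⟩ := hmem j hj
    have : (j : ℝ) ≤ ((k - 2 : ℕ) : ℝ) := by exact_mod_cast h2
    have hc : ((k - 2 : ℕ) : ℝ) = (k : ℝ) - 2 := by
      push_cast [Nat.cast_sub (by omega : 2 ≤ k)]; ring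
    have hM1 : (1 : ℝ) ≤ (M : ℝ) := by exact_mod_cast (by omega : 1 ≤ M)
    rw [hc] at this
    linarith
  have hposb : ∀ j ∈ Finset.Icc (M + 1) (k - 2), (0 : ℝ) < (j : ℝ) := by
    intro j hj
    obtain ⟨h1, _⟩ := hmem j hj
    exact_mod_cast Nat.lt_of_lt_of_le (by omega) h1
  constructor
  · -- termwise
    rw [← Finset.sum_add_distrib, Finset.mul_sum]
    apply Finset.sum_le_sum
    intro j hj
    have h := termIneq ((k : ℝ) + M - 1 - j) j (hposa j hj) (hposb j hj)
    rw [show ((k : ℝ) + M - 1 - j + j) = (k : ℝ) + M - 1 by ring] at h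
    exact h
  · -- sum bounds
    have hc2 : ((k - 2 : ℕ) : ℝ) = (k : ℝ) - 2 := by
      push_cast [Nat.cast_sub (by omega : 2 ≤ k)]; ring
    have hMpos : (0 : ℝ) < (M : ℝ) := by exact_mod_cast (by omega : 0 < M)
    have hk2pos : (0 : ℝ) < ((k - 2 : ℕ) : ℝ) := by exact_mod_cast (by omega : 0 < k - 2)
    have hbound2 : ∑ j ∈ Finset.Icc (M + 1) (k - 2), ((j : ℝ) ^ 2)⁻¹ ≤ (M : ℝ)⁻¹ := by
      have := sumInvSq M (by omega) (k - 2) (by omega)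
      have : (0 : ℝ) < ((k - 2 : ℕ) : ℝ)⁻¹ := by positivity
      linarith [sumInvSq M (by omega : 1 ≤ M) (k - 2) (by omega : M ≤ k - 2)]
    have hre : ∑ j ∈ Finset.Icc (M + 1) (k - 2), (((k : ℝ) + M - 1 - j) ^ 2)⁻¹
        = ∑ j ∈ Finset.Icc (M + 1) (k - 2), ((j : ℝ) ^ 2)⁻¹ := by
      apply Finset.sum_nbij' (i := fun j => k + M - 1 - j) (j := fun j => k + M - 1 - j)
      · intro a ha
        obtain ⟨h1, h2⟩ := hmem a ha
        simp only [Finset.mem_Icc]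
        omega
      · intro a ha
        simp only [Finset.mem_Icc] at ha ⊢
        omega
      · intro a ha
        obtain ⟨h1, h2⟩ := hmem a ha
        omega
      · intro a ha
        simp only [Finset.mem_Icc] at ha
        omega
      · intro a ha
        obtain ⟨h1, h2⟩ := hmem a ha
        have hcast : ((k + M - 1 - a : ℕ) : ℝ) = (k : ℝ) + M - 1 - a := by
          have h3 : a ≤ k + M - 1 := by omega
          push_cast [Nat.cast_sub h3, Nat.cast_sub (by omega : 1 ≤ k + M)]
          ring
        rw [hcast]
    rw [hre]
    have hs : (0 : ℝ) < (((k : ℝ) + M - 1) ^ 2)⁻¹ := by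
      have h1 : (1 : ℝ) ≤ (k : ℝ) := by exact_mod_cast (by omega : 1 ≤ k)
      have h2 : (0 : ℝ) ≤ (M : ℝ) := by positivity
      have h3 : (0 : ℝ) < (k : ℝ) + M - 1 := by linarith
      positivity
    nlinarith [hbound2, hs]
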